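/- arXiv:hep-th/9308146 — 5 statements merged into one kernel-verified Lean document; each statement's English description precedes it below -/
import Mathlib

section
/- Let p be a positive integer and x a real number. Set j = p + x - 1 and c = (1-p²)/3 - x². Then there exists a representation of the finite W₃^(2) relations on ℝ^p, i.e. linear operators H, E, F, C on ℝ^p with [H,E] = 2E, [H,F] = -2F, [E,F] = H² + C, C = ((1-p²)/3 - x²)·Id, such that H is diagonalizable with eigenvalues {j - 2k : k = 0, 1, ..., p-1}, each with one-dimensional eigenspace. -/
/-!
In the basis `v₀, …, v_{p-1}`, take `H` diagonal with the distinct weights `j - 2k`, `F` the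
lowering shift `v_k ↦ v_{k+1}` and `E` the raising shift `v_k ↦ A(k) v_{k-1}` with
`A(k) = ∑_{i<k} ((j - 2i)² + c)`. Since consecutive weights differ by `2`, `[H,E] = 2E` and
`[H,F] = -2F`. The commutator `[E,F]` is diagonal with entries `A(k+1) - A(k) = (j - 2k)² + c`,
the boundary terms at `k = 0` and `k = p - 1` vanishing because `A(0) = 0` and `A(p) = 0`; by the
closed form `3A(k) = k(3(j² + c) - 6(k-1)j + 2(k-1)(2k-1))`, the value `c = (1-p²)/3 - x²` is
exactly the one making `A(p)` vanish. The spectral claims hold for any diagonal operator with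
distinct entries.
-/

open Matrix Finset

theorem Fin.sum_univ_ite_val_eq {R : Type*} [AddCommMonoid R] {m : ℕ} (n : ℕ) (f : Fin m → R) :
    ∑ k : Fin m, (if (k : ℕ) = n then f k else 0) = if h : n < m then f ⟨n, h⟩ else 0 := by
  split_ifs with h
  · simp [← Fin.ext_iff (b := ⟨n, h⟩)]
  · exact sum_eq_zero fun k _ => if_neg (by omega)

section DiagonalEigenspace

variable {K n : Type*} [Field K] [Fintype n] [DecidableEq n] {d : n → K}

theorem eigenspace_toLin'_diagonal (hd : Function.Injective d) (k : n) :
    Module.End.eigenspace (toLin' (diagonal d)) (d k) = K ∙ Pi.single k 1 := by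
  apply le_antisymm
  · intro v hv
    have hvi (i : n) : d i * v i = d k * v i := by
      simpa only [toLin'_apply, mulVec_diagonal, Pi.smul_apply, smul_eq_mul] using
        congrFun (Module.End.mem_eigenspace_iff.mp hv) i
    refine Submodule.mem_span_singleton.mpr ⟨v k, funext fun i => ?_⟩
    rcases eq_or_ne i k with rfl | hik
    · simp
    · have hvi0 : v i = 0 := by
        by_contra h0
        exact hd.ne hik (mul_right_cancel₀ h0 (hvi i))
      simp [Pi.single_eq_of_ne hik, hvi0]
  · rw [Submodule.span_singleton_le_iff_mem, Module.End.mem_eigenspace_iff,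
      ← Pi.basisFun_apply K]
    exact (hasEigenvector_toLin'_diagonal d k).apply_eq_smul

theorem finrank_eigenspace_toLin'_diagonal (hd : Function.Injective d) (k : n) :
    Module.finrank K (Module.End.eigenspace (toLin' (diagonal d)) (d k)) = 1 := by
  rw [eigenspace_toLin'_diagonal hd, finrank_span_singleton]
  exact Pi.single_ne_zero_iff.mpr one_ne_zero

end DiagonalEigenspace

namespace W32

structure Relations (R : Type*) {A : Type*} [CommRing R] [Ring A] [Algebra R A]
    (H E F C : A) : Prop where
  comm_H_E : H * E - E * H = (2 : R) • E
  comm_H_F : H * F - F * H = -((2 : R) • F)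
  comm_E_F : E * F - F * E = H ^ 2 + C

theorem Relations.map {R A B Φ : Type*} [CommRing R] [Ring A] [Algebra R A] [Ring B]
    [Algebra R B] [FunLike Φ A B] [AlgHomClass Φ R A B] {H E F C : A}
    (h : Relations R H E F C) (f : Φ) : Relations R (f H) (f E) (f F) (f C) where
  comm_H_E := by rw [← map_mul, ← map_mul, ← map_sub, h.comm_H_E, map_smul]
  comm_H_F := by rw [← map_mul, ← map_mul, ← map_sub, h.comm_H_F, map_neg, map_smul]
  comm_E_F := by rw [← map_mul, ← map_mul, ← map_sub, h.comm_E_F, map_add, map_pow]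

section Shift

variable {R : Type*} [CommRing R] {m : ℕ}

/-- Column `k` is the image of the basis vector `v_k`: `raising a` sends `v_k ↦ a k • v_{k-1}`
(and `v₀ ↦ 0`), while `lowering` sends `v_k ↦ v_{k+1}` (and `v_{m-1} ↦ 0`). -/
def raising (a : ℕ → R) : Matrix (Fin m) (Fin m) R :=
  of fun i j => if (j : ℕ) = i + 1 then a j else 0

def lowering : Matrix (Fin m) (Fin m) R :=
  of fun i j => if (i : ℕ) = j + 1 then 1 else 0

theorem diagonal_mul_raising_sub {h : ℕ → R} {s : R} (hs : ∀ k, h k - h (k + 1) = s)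
    (a : ℕ → R) :
    diagonal (fun i : Fin m => h i) * raising a - raising a * diagonal (fun i : Fin m => h i) =
      s • raising a := by
  ext i j
  simp only [Matrix.sub_apply, diagonal_mul, mul_diagonal, Matrix.smul_apply, raising, of_apply,
    smul_eq_mul]
  split_ifs with hij
  · rw [hij, ← hs i]; ring
  · simp

theorem diagonal_mul_lowering_sub {h : ℕ → R} {s : R} (hs : ∀ k, h k - h (k + 1) = s) :
    diagonal (fun i : Fin m => h i) * lowering - lowering * diagonal (fun i : Fin m => h i) =
      -(s • lowering) := by
  ext i j
  simp only [Matrix.sub_apply, diagonal_mul, mul_diagonal, Matrix.neg_apply, Matrix.smul_apply,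
    lowering, of_apply, smul_eq_mul]
  split_ifs with hij
  · rw [hij, ← hs j]; ring
  · simp

theorem raising_mul_lowering {a : ℕ → R} (ha : a m = 0) :
    raising a * lowering = diagonal (fun i : Fin m => a (i + 1)) := by
  ext i j
  simp only [Matrix.mul_apply, raising, lowering, of_apply, mul_ite, mul_one, mul_zero,
    Fin.sum_univ_ite_val_eq, diagonal_apply]
  rcases eq_or_ne i j with rfl | hij
  · simp only [if_true]
    split_ifs with hlt
    · rfl
    · rw [show (i : ℕ) + 1 = m by omega, ha]
  · simp [Fin.val_inj, hij.symm, hij]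

theorem lowering_mul_raising {a : ℕ → R} (ha : a 0 = 0) :
    lowering * raising a = diagonal (fun i : Fin m => a i) := by
  ext i j
  simp only [Matrix.mul_apply, raising, lowering, of_apply, ite_mul, zero_mul, mul_ite, mul_zero,
    one_mul, diagonal_apply]
  rcases eq_or_ne i j with rfl | hij
  · obtain h0 | hpos := Nat.eq_zero_or_pos i
    · simp [h0, ha]
    · have hk (k : Fin m) : (i : ℕ) = k + 1 ↔ (k : ℕ) = i - 1 := by omega
      simp only [hk, Fin.sum_univ_ite_val_eq, if_true]
      rw [dif_pos (by omega)]
  · rw [if_neg hij]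
    refine sum_eq_zero fun k _ => ?_
    have : (i : ℕ) ≠ j := Fin.val_ne_of_ne hij
    split_ifs <;> first | rfl | omega

end Shift

section Weights

variable {R : Type*} [CommRing R]

def weight (j : R) (k : ℕ) : R := j - 2 * k

/-- The coefficient `A(k)` of the paper, written as the telescoping sum that `[E,F] = H² + C`
forces on it. -/
def raisingCoeff (j c : R) (k : ℕ) : R := ∑ i ∈ range k, (weight j i ^ 2 + c)

theorem weight_sub_weight_succ (j : R) (k : ℕ) : weight j k - weight j (k + 1) = 2 := by
  simp only [weight]; push_cast; ring

theorem weight_injective {K : Type*} [Field K] [CharZero K] (j : K) :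
    Function.Injective (weight j) := fun k l h => by
  simpa [weight] using h

theorem raisingCoeff_zero (j c : R) : raisingCoeff j c 0 = 0 := sum_range_zero _

theorem raisingCoeff_succ_sub (j c : R) (k : ℕ) :
    raisingCoeff j c (k + 1) - raisingCoeff j c k = weight j k ^ 2 + c :=
  sum_range_succ_sub_sum _

theorem three_mul_raisingCoeff (j c : R) (k : ℕ) :
    3 * raisingCoeff j c k =
      k * (3 * (j ^ 2 + c) - 6 * (k - 1) * j + 2 * (k - 1) * (2 * k - 1)) := by
  induction k with
  | zero => simp [raisingCoeff]
  | succ k ih =>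
    rw [raisingCoeff, sum_range_succ, mul_add, ← raisingCoeff, ih, weight]
    push_cast; ring

theorem raisingCoeff_eq_zero {K : Type*} [Field K] [CharZero K] (p : ℕ) (x : K) :
    raisingCoeff ((p : K) + x - 1) ((1 - (p : K) ^ 2) / 3 - x ^ 2) p = 0 := by
  refine (mul_eq_zero.mp ?_).resolve_left (three_ne_zero : (3 : K) ≠ 0)
  rw [three_mul_raisingCoeff]
  ring

theorem relations_of_raisingCoeff_eq_zero {j c : R} {p : ℕ} (hp : raisingCoeff j c p = 0) :
    Relations R (diagonal fun i : Fin p => weight j i) (raising (raisingCoeff j c)) lowering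
      (c • 1) where
  comm_H_E := diagonal_mul_raising_sub (weight_sub_weight_succ j) _
  comm_H_F := diagonal_mul_lowering_sub (weight_sub_weight_succ j)
  comm_E_F := by
    rw [raising_mul_lowering hp, lowering_mul_raising (raisingCoeff_zero j c), diagonal_sub,
      diagonal_pow, smul_one_eq_diagonal, diagonal_add]
    exact congrArg diagonal (funext fun i => raisingCoeff_succ_sub j c i)

end Weights

end W32

open W32

theorem exists_W3_2_highest_weight_rep_general (p : ℕ) (x : ℝ) :
    ∃ H E F C : Module.End ℝ (Fin p → ℝ),
      H * E - E * H = (2 : ℝ) • E ∧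
      H * F - F * H = -((2 : ℝ) • F) ∧
      E * F - F * E = H ^ 2 + C ∧
      C = ((1 - (p : ℝ) ^ 2) / 3 - x ^ 2) • (1 : Module.End ℝ (Fin p → ℝ)) ∧
      (∀ k : ℕ, k < p →
        Module.finrank ℝ (Module.End.eigenspace H (((p : ℝ) + x - 1) - 2 * k)) = 1) ∧
      (∀ μ : ℝ, Module.End.HasEigenvalue H μ →
        ∃ k : ℕ, k < p ∧ μ = ((p : ℝ) + x - 1) - 2 * k) ∧
      (⨆ μ : ℝ, Module.End.eigenspace H μ) = ⊤ := by
  obtain ⟨hHE, hHF, hEF⟩ :=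
    (relations_of_raisingCoeff_eq_zero (raisingCoeff_eq_zero p x)).map toLinAlgEquiv'
  have hd : Function.Injective fun i : Fin p => weight ((p : ℝ) + x - 1) i :=
    (weight_injective _).comp Fin.val_injective
  refine ⟨_, _, _, _, hHE, hHF, hEF, by simp, fun k hk => ?_, fun μ hμ => ?_,
    iSup_eigenspace_toLin'_diagonal_eq_top _⟩
  · exact finrank_eigenspace_toLin'_diagonal hd ⟨k, hk⟩
  · obtain ⟨i, rfl⟩ := (hasEigenvalue_toLin'_diagonal_iff _).mp hμ
    exact ⟨i, i.isLt, rfl⟩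

/-- Existence of the `p`-dimensional highest weight representation `W(p,x)` of the
finite W-algebra `W₃⁽²⁾`: there are linear operators `H, E, F, C` on `ℝ^p` with
`[H,E] = 2E`, `[H,F] = -2F`, `[E,F] = H² + C`, `C = ((1-p²)/3 - x²)·Id`, such that `H`
is diagonalizable with eigenvalues `{j - 2k : k = 0,...,p-1}` (where `j = p + x - 1`),
each with one-dimensional eigenspace. -/
theorem exists_W3_2_highest_weight_rep (p : ℕ) (hp : 0 < p) (x : ℝ) :
    ∃ H E F C : Module.End ℝ (Fin p → ℝ),
      H * E - E * H = (2 : ℝ) • E ∧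
      H * F - F * H = -((2 : ℝ) • F) ∧
      E * F - F * E = H ^ 2 + C ∧
      C = ((1 - (p : ℝ) ^ 2) / 3 - x ^ 2) • (1 : Module.End ℝ (Fin p → ℝ)) ∧
      (∀ k : ℕ, k < p →
        Module.finrank ℝ (Module.End.eigenspace H (((p : ℝ) + x - 1) - 2 * k)) = 1) ∧
      (∀ μ : ℝ, Module.End.HasEigenvalue H μ →
        ∃ k : ℕ, k < p ∧ μ = ((p : ℝ) + x - 1) - 2 * k) ∧
      (⨆ μ : ℝ, Module.End.eigenspace H μ) = ⊤ :=
  exists_W3_2_highest_weight_rep_general p x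
end

section
/- Let p ≥ 2 be an integer and x a real number. Set j = p + x - 1, c = (1-p²)/3 - x², and for k = 1, ..., p-1 define A(k) = k(j² + c) - 2k(k-1)j + (2/3)k(k-1)(2k-1). Then A(k) > 0 for all k ∈ {1, ..., p-1} if and only if x > p/3 - 2/3. -/
/-- Unitarity criterion for the representation `W(p,x)` of the finite W-algebra `W₃⁽²⁾`:
with `j = p + x - 1`, `c = (1-p²)/3 - x²` and
`A(k) = k(j² + c) - 2k(k-1)j + (2/3)k(k-1)(2k-1)`, one has `A(k) > 0` for all
`k = 1, ..., p-1` iff `x > p/3 - 2/3`. -/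
theorem W3_2_unitarity_criterion (p : ℕ) (hp : 2 ≤ p) (x : ℝ)
    (j c : ℝ) (hj : j = (p : ℝ) + x - 1) (hc : c = (1 - (p : ℝ) ^ 2) / 3 - x ^ 2)
    (A : ℕ → ℝ)
    (hA : ∀ k : ℕ, A k = (k : ℝ) * (j ^ 2 + c) - 2 * (k : ℝ) * ((k : ℝ) - 1) * j
      + 2 / 3 * (k : ℝ) * ((k : ℝ) - 1) * (2 * (k : ℝ) - 1)) :
    (∀ k : ℕ, 1 ≤ k → k ≤ p - 1 → 0 < A k) ↔ x > (p : ℝ) / 3 - 2 / 3 := by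
  have key : ∀ k : ℕ, A k = 2 / 3 * (k : ℝ) * ((p : ℝ) - k) * (3 * x + p - 2 * k) := by
    intro k
    rw [hA, hj, hc]; ring
  constructor
  · intro h
    have h1 := h (p - 1) (by omega) le_rfl
    rw [key] at h1
    have hcast : ((p - 1 : ℕ) : ℝ) = (p : ℝ) - 1 := by
      push_cast [Nat.cast_sub (by omega : 1 ≤ p)]; ring
    rw [hcast] at h1
    have hp1 : (2 : ℝ) ≤ (p : ℝ) := by exact_mod_cast hp
    nlinarith [h1]
  · intro hx k hk1 hk2
    rw [key]
    have hk1' : (1 : ℝ) ≤ (k : ℝ) := by exact_mod_cast hk1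
    have hk2' : (k : ℝ) ≤ (p : ℝ) - 1 := by
      have : k + 1 ≤ p := by omega
      have := (Nat.cast_le (α := ℝ)).mpr this
      push_cast at this; linarith
    have f1 : (0:ℝ) < 2 / 3 * (k : ℝ) := by linarith
    have f2 : (0:ℝ) < (p : ℝ) - k := by linarith
    have f3 : (0:ℝ) < 3 * x + (p : ℝ) - 2 * k := by linarith
    nlinarith [mul_pos (mul_pos f1 f2) f3]
end

section
/- Let A be an associative ℚ-algebra containing elements h, e, f, s such that [h,e] = e, [h,f] = -f, [e,f] = 2h, and s commutes with h, e, f. Define C = -(4/3)(h² + (1/2)ef + (1/2)fe) - (4/9)s² + (4/3)s - 1, H = 2h - (2/3)s + 1, E = -2(s - h - 1)e, and F = (2/3)f. Then [H,E] = 2E, [H,F] = -2F, [E,F] = H² + C, and C commutes with H, E, and F. -/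
/-- The quantum Miura transformation for the finite W-algebra `W₃⁽²⁾`: in an associative
ℚ-algebra containing `sl₂` elements `h, e, f` (`[h,e] = e`, `[h,f] = -f`, `[e,f] = 2h`)
and a commuting element `s`, the elements
`C = -(4/3)(h² + ½ef + ½fe) - (4/9)s² + (4/3)s - 1`, `H = 2h - (2/3)s + 1`,
`E = -2(s - h - 1)e`, `F = (2/3)f` satisfy the `W₃⁽²⁾` relations `[H,E] = 2E`,
`[H,F] = -2F`, `[E,F] = H² + C`, with `C` commuting with `H`, `E`, `F`. -/
theorem quantum_miura_W3_2
    {A : Type*} [Ring A] [Algebra ℚ A] (h e f s : A)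
    (hhe : h * e - e * h = e)
    (hhf : h * f - f * h = -f)
    (hef : e * f - f * e = 2 * h)
    (hsh : s * h = h * s) (hse : s * e = e * s) (hsf : s * f = f * s)
    (C H E F : A)
    (hC : C = -((4 : ℚ) / 3) • (h ^ 2 + ((1 : ℚ) / 2) • (e * f) + ((1 : ℚ) / 2) • (f * e))
      - ((4 : ℚ) / 9) • s ^ 2 + ((4 : ℚ) / 3) • s - 1)
    (hH : H = 2 * h - ((2 : ℚ) / 3) • s + 1)
    (hE : E = -(2 * ((s - h - 1) * e)))
    (hF : F = ((2 : ℚ) / 3) • f) :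
    H * E - E * H = 2 * E ∧
    H * F - F * H = -(2 * F) ∧
    E * F - F * E = H ^ 2 + C ∧
    C * H = H * C ∧ C * E = E * C ∧ C * F = F * C := by
  have he : h * e = e * h + e := by rw [eq_add_of_sub_eq hhe]; abel
  have he' : ∀ x : A, h * (e * x) = e * (h * x) + e * x := fun x => by
    rw [← mul_assoc, he]; noncomm_ring
  have fe : f * e = e * f - (2:ℚ) • h := by
    have h2 : (2:ℚ) • h = 2 * h := by rw [two_smul, two_mul]
    rw [h2, eq_sub_iff_add_eq, ← hef]; noncomm_ring
  have fe' : ∀ x : A, f * (e * x) = e * (f * x) - (2:ℚ) • (h * x) := fun x => by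
    rw [← mul_assoc, fe]; simp [sub_mul, smul_mul_assoc, mul_assoc]
  have fh : f * h = h * f + f := by
    rw [eq_add_of_sub_eq (by rw [← neg_sub, hhf, neg_neg] : f * h - h * f = f)]; abel
  have fh' : ∀ x : A, f * (h * x) = h * (f * x) + f * x := fun x => by
    rw [← mul_assoc, fh]; noncomm_ring
  have sh' : ∀ x : A, s * (h * x) = h * (s * x) := fun x => by rw [← mul_assoc, hsh, mul_assoc]
  have se' : ∀ x : A, s * (e * x) = e * (s * x) := fun x => by rw [← mul_assoc, hse, mul_assoc]
  have sf' : ∀ x : A, s * (f * x) = f * (s * x) := fun x => by rw [← mul_assoc, hsf, mul_assoc]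
  subst hC hH hE hF
  refine ⟨?_, ?_, ?_, ?_, ?_, ?_⟩ <;>
  · simp only [pow_two, mul_add, add_mul, mul_sub, sub_mul, neg_mul, mul_neg, neg_neg,
      smul_mul_assoc, mul_smul_comm, smul_smul, smul_add, smul_sub, smul_neg,
      mul_assoc, one_mul, mul_one, two_mul,
      he, he', fe, fe', fh, fh', hsh, hse, hsf, sh', se', sf']
    module
end

section
/- Let A be an associative ℚ-algebra, n a positive integer, and suppose A contains: elements φ₁, ..., φ_n satisfying φ_iφ_j - φ_jφ_i = Σ_k C^k_{ij} φ_k for scalars C^k_{ij} ∈ ℚ which are the structure constants of a Lie algebra (i.e. C^k_{ij} = -C^k_{ji} and Σ_m (C^m_{ij}C^l_{mk} + C^m_{jk}C^l_{mi} + C^m_{ki}C^l_{mj}) = 0 for all i,j,k,l); and odd elements b₁,...,b_n, c₁,...,c_n satisfying b_ic_j + c_jb_i = δ_{ij}, c_ic_j + c_jc_i = 0, b_ib_j + b_jb_i = 0, and each b_i, c_i commutes with each φ_j. Then the element Q = Σ_i φ_i c_i - (1/2) Σ_{i,j,k} C^k_{ij} b_k c_i c_j satisfies Q² = 0. -/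
private lemma brst_sum_rot3 {M : Type*} [AddCommMonoid M] {n : ℕ}
    (f : Fin n → Fin n → Fin n → M) :
    ∑ a, ∑ b, ∑ c, f a b c = ∑ b, ∑ c, ∑ a, f a b c := by
  rw [Finset.sum_comm]
  exact Finset.sum_congr rfl fun _ _ => by rw [Finset.sum_comm]

private lemma brst_sum_rot4 {M : Type*} [AddCommMonoid M] {n : ℕ}
    (f : Fin n → Fin n → Fin n → Fin n → M) :
    ∑ a, ∑ b, ∑ c, ∑ d, f a b c d = ∑ b, ∑ c, ∑ d, ∑ a, f a b c d := by
  rw [Finset.sum_comm]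
  exact Finset.sum_congr rfl fun b _ => brst_sum_rot3 (fun a c d => f a b c d)

private lemma brst_sum_rot5 {M : Type*} [AddCommMonoid M] {n : ℕ}
    (f : Fin n → Fin n → Fin n → Fin n → Fin n → M) :
    ∑ a, ∑ b, ∑ c, ∑ d, ∑ e, f a b c d e = ∑ b, ∑ c, ∑ d, ∑ e, ∑ a, f a b c d e := by
  rw [Finset.sum_comm]
  exact Finset.sum_congr rfl fun b _ => brst_sum_rot4 (fun a c d e => f a b c d e)

private lemma brst_sum_rot6 {M : Type*} [AddCommMonoid M] {n : ℕ}
    (f : Fin n → Fin n → Fin n → Fin n → Fin n → Fin n → M) :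
    ∑ a, ∑ b, ∑ c, ∑ d, ∑ e, ∑ p, f a b c d e p
      = ∑ b, ∑ c, ∑ d, ∑ e, ∑ p, ∑ a, f a b c d e p := by
  rw [Finset.sum_comm]
  exact Finset.sum_congr rfl fun b _ => brst_sum_rot5 (fun a c d e p => f a b c d e p)

/-- Nilpotency of the BRST charge of a finite-dimensional constrained system: if
`φ₁,...,φ_n` represent a Lie algebra with structure constants `C^k_{ij}` (antisymmetric
and satisfying the Jacobi identity), and `b_i, c_i` generate a Clifford algebra of ghosts
commuting with the `φ_j`, then `Q = Σ_i φ_i c_i - (1/2) Σ C^k_{ij} b_k c_i c_j`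
satisfies `Q² = 0`. -/
theorem brst_charge_squared_zero
    {A : Type*} [Ring A] [Algebra ℚ A] (n : ℕ)
    (φ b c : Fin n → A) (C : Fin n → Fin n → Fin n → ℚ)
    (hφ : ∀ i j, φ i * φ j - φ j * φ i = ∑ k, C k i j • φ k)
    (hCanti : ∀ i j k, C k i j = -C k j i)
    (hjac : ∀ i j k l, ∑ m, (C m i j * C l m k + C m j k * C l m i + C m k i * C l m j) = 0)
    (hbc : ∀ i j, b i * c j + c j * b i = if i = j then 1 else 0)
    (hcc : ∀ i j, c i * c j + c j * c i = 0)
    (hbb : ∀ i j, b i * b j + b j * b i = 0)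
    (hbφ : ∀ i j, b i * φ j = φ j * b i)
    (hcφ : ∀ i j, c i * φ j = φ j * c i)
    (Q : A)
    (hQ : Q = (∑ i, φ i * c i)
      - ((1 : ℚ) / 2) • ∑ i, ∑ j, ∑ k, C k i j • (b k * (c i * c j))) :
    Q * Q = 0 := by
  classical
  -- derived pointwise identities
  have cswap : ∀ i j, c i * c j = -(c j * c i) := fun i j =>
    eq_neg_of_add_eq_zero_left (hcc i j)
  have bswap : ∀ i j, b i * b j = -(b j * b i) := fun i j =>
    eq_neg_of_add_eq_zero_left (hbb i j)
  have cbe : ∀ i j, c j * b i = (if i = j then 1 else 0) - b i * c j := fun i j =>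
    eq_sub_of_add_eq' (hbc i j)
  have halfz : ∀ x : A, x + x = 0 → x = 0 := by
    intro x h
    have h2 : (2:ℚ) • x = 0 := by rw [two_smul]; exact h
    simpa using smul_eq_zero.mp h2
  have thirdz : ∀ x : A, x + x + x = 0 → x = 0 := by
    intro x h
    have h3 : (3:ℚ) • x = 0 := by
      rw [show (3:ℚ) = 2 + 1 by norm_num, add_smul, two_smul, one_smul]; exact h
    simpa using smul_eq_zero.mp h3
  -- ghost rearrangement identities
  have P6 : ∀ l m i j, (c l * c m) * (c i * c j) = (c i * c j) * (c l * c m) := by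
    intro l m i j
    linear_combination (norm := noncomm_ring)
      c l * hcc m i * c j - hcc l i * (c m * c j) + (c i * c l) * hcc m j - c i * hcc l j * c m
  have P7 : ∀ i l m, c l * (c m * c i) = c i * (c l * c m) := by
    intro i l m
    linear_combination (norm := noncomm_ring) c l * hcc m i - hcc l i * c m
  set S : A := ∑ i, φ i * c i with hS
  set T : A := ∑ i, ∑ j, ∑ k, C k i j • (b k * (c i * c j)) with hT
  set P : A := ∑ i, ∑ j, ∑ k, C k i j • (φ k * (c i * c j)) with hP
  -- ────────────────────────────── L1 : S*S + S*S = P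
  have hSS : S * S + S * S = P := by
    have e1 : S * S = ∑ i, ∑ j, (φ i * c i) * (φ j * c j) := by
      rw [hS, Finset.sum_mul_sum]
    have e2 : S * S = ∑ i, ∑ j, (φ j * c j) * (φ i * c i) := by
      rw [e1, Finset.sum_comm]
    calc S * S + S * S
        = (∑ i, ∑ j, (φ i * c i) * (φ j * c j))
          + ∑ i, ∑ j, (φ j * c j) * (φ i * c i) := by rw [← e1, ← e2]
      _ = ∑ i, ∑ j, ((φ i * c i) * (φ j * c j) + (φ j * c j) * (φ i * c i)) := by
          rw [← Finset.sum_add_distrib]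
          exact Finset.sum_congr rfl fun i _ => by rw [← Finset.sum_add_distrib]
      _ = P := by
          rw [hP]
          refine Finset.sum_congr rfl fun i _ => Finset.sum_congr rfl fun j _ => ?_
          have key : (φ i * φ j - φ j * φ i) * (c i * c j)
              = ∑ k, C k i j • (φ k * (c i * c j)) := by
            rw [hφ i j, Finset.sum_mul]
            exact Finset.sum_congr rfl fun k _ => smul_mul_assoc _ _ _
          rw [← key]
          linear_combination (norm := noncomm_ring)
            φ i * (hcφ i j) * c j + φ j * (hcφ j i) * c i + (φ j * φ i) * (hcc j i)
  -- ────────────────────────────── L2 : S*T + T*S = P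
  have hbcφ : ∀ k i j l, (b k * (c i * c j)) * φ l = φ l * (b k * (c i * c j)) := by
    intro k i j l
    linear_combination (norm := noncomm_ring)
      b k * c i * (hcφ j l) + b k * (hcφ i l) * c j + (hbφ k l) * (c i * c j)
  have P2 : ∀ l i j k, c l * (b k * (c i * c j)) + (b k * (c i * c j)) * c l
      = (if k = l then 1 else 0) * (c i * c j) := by
    intro l i j k
    linear_combination (norm := noncomm_ring)
      (cbe k l) * (c i * c j) - b k * (hcc l i) * c j + b k * c i * (hcc l j)
  have P4 : ∀ l i j k, (φ l * c l) * (C k i j • (b k * (c i * c j)))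
      + (C k i j • (b k * (c i * c j))) * (φ l * c l)
      = if k = l then C k i j • (φ l * (c i * c j)) else 0 := by
    intro l i j k
    have h1 : (φ l * c l) * (C k i j • (b k * (c i * c j)))
        = C k i j • (φ l * (c l * (b k * (c i * c j)))) := by
      rw [mul_smul_comm, mul_assoc]
    have h2 : (C k i j • (b k * (c i * c j))) * (φ l * c l)
        = C k i j • (φ l * ((b k * (c i * c j)) * c l)) := by
      rw [smul_mul_assoc]
      congr 1
      linear_combination (norm := noncomm_ring) (hbcφ k i j l) * c l
    rw [h1, h2, ← smul_add, ← mul_add, P2]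
    by_cases hkl : k = l <;> simp [hkl]
  have hST : S * T + T * S = P := by
    have eST : S * T = ∑ i, ∑ j, ∑ k, ∑ l,
        (φ l * c l) * (C k i j • (b k * (c i * c j))) := by
      rw [hS, hT]; simp only [Finset.sum_mul, Finset.mul_sum]
    have eTS : T * S = ∑ i, ∑ j, ∑ k, ∑ l,
        (C k i j • (b k * (c i * c j))) * (φ l * c l) := by
      rw [hS, hT]; simp only [Finset.sum_mul, Finset.mul_sum]
      exact brst_sum_rot4 (fun l i j k => (C k i j • (b k * (c i * c j))) * (φ l * c l))
    calc S * T + T * S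
        = ∑ i, ∑ j, ∑ k, ∑ l, ((φ l * c l) * (C k i j • (b k * (c i * c j)))
            + (C k i j • (b k * (c i * c j))) * (φ l * c l)) := by
          rw [eST, eTS, ← Finset.sum_add_distrib]
          refine Finset.sum_congr rfl fun i _ => ?_
          rw [← Finset.sum_add_distrib]
          refine Finset.sum_congr rfl fun j _ => ?_
          rw [← Finset.sum_add_distrib]
          refine Finset.sum_congr rfl fun k _ => ?_
          rw [← Finset.sum_add_distrib]
      _ = ∑ i, ∑ j, ∑ k, ∑ l,
            (if k = l then C k i j • (φ l * (c i * c j)) else 0) := by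
          simp only [P4]
      _ = P := by
          rw [hP]
          refine Finset.sum_congr rfl fun i _ => Finset.sum_congr rfl fun j _ =>
            Finset.sum_congr rfl fun k _ => ?_
          simp [Finset.sum_ite_eq]
  -- ────────────────────────────── L3 : T*T = 0
  have hTT : T * T = 0 := by
    -- pointwise expansion
    have core : ∀ i j k l m p : Fin n,
        (C k i j • (b k * (c i * c j))) * (C p l m • (b p * (c l * c m)))
        = (if p = j then (C k i j * C p l m) • (b k * (c i * (c l * c m))) else 0)
          - (if p = i then (C k i j * C p l m) • (b k * (c j * (c l * c m))) else 0)
          + (C k i j * C p l m) • ((b k * b p) * ((c i * c j) * (c l * c m))) := by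
      intro i j k l m p
      have base : (b k * (c i * c j)) * (b p * (c l * c m))
          = (if p = j then (1:A) else 0) * (b k * (c i * (c l * c m)))
            - (if p = i then (1:A) else 0) * (b k * (c j * (c l * c m)))
            + (b k * b p) * ((c i * c j) * (c l * c m)) := by
        have e1 := cbe p j
        have e2 := cbe p i
        by_cases h1 : p = j
        · by_cases h2 : p = i
          · rw [if_pos h1] at e1; rw [if_pos h2] at e2; rw [if_pos h1, if_pos h2]
            linear_combination (norm := noncomm_ring)
              (b k * c i) * e1 * (c l * c m) - b k * e2 * (c j * (c l * c m))
          · rw [if_pos h1] at e1; rw [if_neg h2] at e2; rw [if_pos h1, if_neg h2]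
            linear_combination (norm := noncomm_ring)
              (b k * c i) * e1 * (c l * c m) - b k * e2 * (c j * (c l * c m))
        · by_cases h2 : p = i
          · rw [if_neg h1] at e1; rw [if_pos h2] at e2; rw [if_neg h1, if_pos h2]
            linear_combination (norm := noncomm_ring)
              (b k * c i) * e1 * (c l * c m) - b k * e2 * (c j * (c l * c m))
          · rw [if_neg h1] at e1; rw [if_neg h2] at e2; rw [if_neg h1, if_neg h2]
            linear_combination (norm := noncomm_ring)
              (b k * c i) * e1 * (c l * c m) - b k * e2 * (c j * (c l * c m))
      calc (C k i j • (b k * (c i * c j))) * (C p l m • (b p * (c l * c m)))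
          = (C k i j * C p l m) • ((b k * (c i * c j)) * (b p * (c l * c m))) := by
            rw [smul_mul_smul]
        _ = _ := by
            rw [base, smul_add, smul_sub]
            congr 1
            · congr 1
              · split <;> simp
              · split <;> simp
    have eTT : T * T = ∑ i, ∑ j, ∑ k, ∑ l, ∑ m, ∑ p,
        (C k i j • (b k * (c i * c j))) * (C p l m • (b p * (c l * c m))) := by
      rw [hT]; simp only [Finset.sum_mul, Finset.mul_sum]
      exact (brst_sum_rot6 (fun l m p i j k =>
          (C k i j • (b k * (c i * c j))) * (C p l m • (b p * (c l * c m))))).trans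
        ((brst_sum_rot6 (fun m p i j k l =>
          (C k i j • (b k * (c i * c j))) * (C p l m • (b p * (c l * c m))))).trans
        (brst_sum_rot6 (fun p i j k l m =>
          (C k i j • (b k * (c i * c j))) * (C p l m • (b p * (c l * c m))))))
    -- jacobi in convenient form
    have jacD : ∀ i l m k, (∑ j, C k i j * C j l m) + (∑ j, C k l j * C j m i)
        + (∑ j, C k m j * C j i l) = 0 := by
      intro i l m k
      have h := hjac l m i k
      rw [← Finset.sum_add_distrib, ← Finset.sum_add_distrib]
      rw [show (0:ℚ) = -∑ j, (C j l m * C k j i + C j m i * C k j l + C j i l * C k j m) by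
        rw [h]; ring, ← Finset.sum_neg_distrib]
      refine Finset.sum_congr rfl fun j _ => ?_
      linear_combination (C j l m) * hCanti i j k + (C j m i) * hCanti l j k
        + (C j i l) * hCanti m j k
    -- the master vanishing lemma
    have main : ∀ (D : Fin n → Fin n → Fin n → Fin n → ℚ),
        (∀ i l m k, D i l m k + D l m i k + D m i l k = 0) →
        (∑ i, ∑ k, ∑ l, ∑ m, D i l m k • (b k * (c i * (c l * c m)))) = 0 := by
      intro D hD
      set f : Fin n × Fin n × Fin n × Fin n → A := fun x =>
        D x.1 x.2.2.1 x.2.2.2 x.2.1 • (b x.2.1 * (c x.1 * (c x.2.2.1 * c x.2.2.2)))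
        with hf
      have conv : (∑ i, ∑ k, ∑ l, ∑ m, D i l m k • (b k * (c i * (c l * c m))))
          = ∑ x : Fin n × Fin n × Fin n × Fin n, f x := by
        simp only [hf, Fintype.sum_prod_type]
      rw [conv]
      set e : (Fin n × Fin n × Fin n × Fin n) ≃ (Fin n × Fin n × Fin n × Fin n) :=
        ⟨fun x => (x.2.2.1, x.2.1, x.2.2.2, x.1),
         fun y => (y.2.2.2, y.2.1, y.1, y.2.2.1),
         fun x => rfl, fun x => rfl⟩ with he
      have r1 : ∑ x, f x = ∑ x, f (e x) := (Equiv.sum_comp e f).symm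
      have r2 : ∑ x, f x = ∑ x, f (e (e x)) :=
        r1.trans ((Equiv.sum_comp e (fun x => f (e x))).symm)
      refine thirdz _ ?_
      have total : (∑ x : Fin n × Fin n × Fin n × Fin n,
          (f x + f (e x) + f (e (e x)))) = 0 := by
        refine Finset.sum_eq_zero fun x _ => ?_
        obtain ⟨i, k, l, m⟩ := x
        show D i l m k • (b k * (c i * (c l * c m)))
            + D l m i k • (b k * (c l * (c m * c i)))
            + D m i l k • (b k * (c m * (c i * c l))) = 0
        have g1 : b k * (c l * (c m * c i)) = b k * (c i * (c l * c m)) := by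
          rw [P7 i l m]
        have g2 : b k * (c m * (c i * c l)) = b k * (c i * (c l * c m)) := by
          rw [P7 l m i, P7 i l m]
        rw [g1, g2, ← add_smul, ← add_smul, hD, zero_smul]
      calc (∑ x, f x) + (∑ x, f x) + (∑ x, f x)
          = (∑ x, f x) + (∑ x, f (e x)) + (∑ x, f (e (e x))) := by rw [← r1, ← r2]
        _ = ∑ x : Fin n × Fin n × Fin n × Fin n, (f x + f (e x) + f (e (e x))) := by
            rw [Finset.sum_add_distrib, Finset.sum_add_distrib]
        _ = 0 := total
    -- first sigma
    have hshape1 : (∑ i, ∑ j, ∑ k, ∑ l, ∑ m,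
        (C k i j * C j l m) • (b k * (c i * (c l * c m))))
        = ∑ i, ∑ k, ∑ l, ∑ m,
            (∑ j, C k i j * C j l m) • (b k * (c i * (c l * c m))) := by
      refine Finset.sum_congr rfl fun i _ => ?_
      rw [brst_sum_rot4 (fun j k l m => (C k i j * C j l m) • (b k * (c i * (c l * c m))))]
      refine Finset.sum_congr rfl fun k _ => Finset.sum_congr rfl fun l _ =>
        Finset.sum_congr rfl fun m _ => ?_
      rw [Finset.sum_smul]
    have hSig1 : (∑ i, ∑ j, ∑ k, ∑ l, ∑ m,
        (C k i j * C j l m) • (b k * (c i * (c l * c m)))) = 0 := by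
      rw [hshape1]
      exact main (fun i l m k => ∑ j, C k i j * C j l m) (fun i l m k => jacD i l m k)
    -- second sigma
    have hshape2 : (∑ i, ∑ j, ∑ k, ∑ l, ∑ m,
        (C k i j * C i l m) • (b k * (c j * (c l * c m))))
        = ∑ i, ∑ k, ∑ l, ∑ m,
            (∑ j, C k j i * C j l m) • (b k * (c i * (c l * c m))) := by
      rw [Finset.sum_comm]
      refine Finset.sum_congr rfl fun j _ => ?_
      rw [brst_sum_rot4 (fun i k l m => (C k i j * C i l m) • (b k * (c j * (c l * c m))))]
      refine Finset.sum_congr rfl fun k _ => Finset.sum_congr rfl fun l _ =>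
        Finset.sum_congr rfl fun m _ => ?_
      rw [Finset.sum_smul]
    have hSig2 : (∑ i, ∑ j, ∑ k, ∑ l, ∑ m,
        (C k i j * C i l m) • (b k * (c j * (c l * c m)))) = 0 := by
      rw [hshape2]
      refine main (fun i l m k => ∑ j, C k j i * C j l m) (fun i l m k => ?_)
      beta_reduce
      have h := jacD i l m k
      have neg1 : (∑ j, C k j i * C j l m) = -∑ j, C k i j * C j l m := by
        rw [← Finset.sum_neg_distrib]
        exact Finset.sum_congr rfl fun j _ => by
          linear_combination (C j l m) * hCanti j i k
      have neg2 : (∑ j, C k j l * C j m i) = -∑ j, C k l j * C j m i := by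
        rw [← Finset.sum_neg_distrib]
        exact Finset.sum_congr rfl fun j _ => by
          linear_combination (C j m i) * hCanti j l k
      have neg3 : (∑ j, C k j m * C j i l) = -∑ j, C k m j * C j i l := by
        rw [← Finset.sum_neg_distrib]
        exact Finset.sum_congr rfl fun j _ => by
          linear_combination (C j i l) * hCanti j m k
      rw [neg1, neg2, neg3]; linarith
    -- third sigma
    have hSig3 : (∑ i, ∑ j, ∑ k, ∑ l, ∑ m, ∑ p,
        (C k i j * C p l m) • ((b k * b p) * ((c i * c j) * (c l * c m)))) = 0 := by
      set g : (Fin n × Fin n × Fin n) → (Fin n × Fin n × Fin n) → A := fun x y =>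
        (C x.2.2 x.1 x.2.1 * C y.2.2 y.1 y.2.1) •
          ((b x.2.2 * b y.2.2) * ((c x.1 * c x.2.1) * (c y.1 * c y.2.1))) with hg
      have conv : (∑ i, ∑ j, ∑ k, ∑ l, ∑ m, ∑ p,
          (C k i j * C p l m) • ((b k * b p) * ((c i * c j) * (c l * c m))))
          = ∑ z : (Fin n × Fin n × Fin n) × (Fin n × Fin n × Fin n), g z.1 z.2 := by
        simp only [hg, Fintype.sum_prod_type]
      rw [conv]
      set e2 : ((Fin n × Fin n × Fin n) × (Fin n × Fin n × Fin n)) ≃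
          ((Fin n × Fin n × Fin n) × (Fin n × Fin n × Fin n)) :=
        ⟨fun z => (z.2, z.1), fun z => (z.2, z.1), fun _ => rfl, fun _ => rfl⟩ with he2
      have rsw : (∑ z : (Fin n × Fin n × Fin n) × (Fin n × Fin n × Fin n), g z.1 z.2)
          = ∑ z : (Fin n × Fin n × Fin n) × (Fin n × Fin n × Fin n), g z.2 z.1 :=
        (Equiv.sum_comp e2 (fun z => g z.1 z.2)).symm
      refine halfz _ ?_
      rw (occs := .pos [2]) [rsw]
      rw [← Finset.sum_add_distrib]
      refine Finset.sum_eq_zero fun z _ => ?_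
      obtain ⟨⟨i, j, k⟩, ⟨l, m, p⟩⟩ := z
      show (C k i j * C p l m) • ((b k * b p) * ((c i * c j) * (c l * c m)))
          + (C p l m * C k i j) • ((b p * b k) * ((c l * c m) * (c i * c j))) = 0
      rw [P6 l m i j, bswap p k, mul_comm (C p l m) (C k i j), ← smul_add]
      simp [neg_mul]
    rw [eTT]
    simp only [core]
    simp only [Finset.sum_add_distrib, Finset.sum_sub_distrib]
    simp only [Finset.sum_ite_eq', Finset.mem_univ, if_true]
    rw [hSig1, hSig2, hSig3]
    simp
  -- ────────────────────────────── assembly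
  have hSS' : S * S = ((1:ℚ)/2) • P := by
    have h2 : (2:ℚ) • (S * S) = P := by rw [two_smul]; exact hSS
    calc S * S = ((1:ℚ)/2) • ((2:ℚ) • (S * S)) := by rw [smul_smul]; norm_num
      _ = ((1:ℚ)/2) • P := by rw [h2]
  rw [hQ]
  calc (S - ((1:ℚ)/2) • T) * (S - ((1:ℚ)/2) • T)
      = S * S - ((1:ℚ)/2) • (S * T + T * S)
        + (((1:ℚ)/2) * ((1:ℚ)/2)) • (T * T) := by
        simp only [mul_sub, sub_mul, smul_mul_assoc, mul_smul_comm, smul_smul, smul_add]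
        module
    _ = ((1:ℚ)/2) • P - ((1:ℚ)/2) • P + (((1:ℚ)/2) * ((1:ℚ)/2)) • (0:A) := by
        rw [hSS', hST, hTT]
    _ = 0 := by simp
end

section
/- Let m ∈ ℚ with m a nonnegative integer, and let s ∈ ℚ. Define linear operators on ℚ[z]: H(f) = (m - (2/3)s + 1)f - 2zf', E(f) = 2(1 - s + m/2)f' - 2zf'', F(f) = (2/3)m·z·f - (2/3)z²·f', and C(f) = (-(1/3)m² - (2/3)m - (4/9)s² + (4/3)s - 1)·f. Then these operators satisfy [H,E] = 2E, [H,F] = -2F, [E,F] = H² + C, and C commutes with H, E, F; moreover the subspace of polynomials of degree at most m is invariant under all four operators. -/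
open Polynomial

/-- The Fock-space (free field) realization of the finite W-algebra `W₃⁽²⁾` on `ℚ[z]`,
for `m` a nonnegative integer and `s ∈ ℚ`:
`H(f) = (m - (2/3)s + 1) f - 2 z f'`, `E(f) = 2(1 - s + m/2) f' - 2 z f''`,
`F(f) = (2/3) m z f - (2/3) z² f'`,
`C(f) = (-(1/3)m² - (2/3)m - (4/9)s² + (4/3)s - 1) f` satisfy `[H,E] = 2E`,
`[H,F] = -2F`, `[E,F] = H² + C`, with `C` commuting with `H, E, F`; moreover the
polynomials of degree at most `m` form an invariant subspace for all four operators. -/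
theorem W3_2_fock_realization (M : ℕ) (m s : ℚ) (hm : m = (M : ℚ))
    (H E F C : Module.End ℚ (Polynomial ℚ))
    (hH : ∀ f : Polynomial ℚ, H f = (m - 2 / 3 * s + 1) • f - (2 : ℚ) • (X * derivative f))
    (hE : ∀ f : Polynomial ℚ, E f = (2 * (1 - s + m / 2)) • derivative f
      - (2 : ℚ) • (X * derivative (derivative f)))
    (hF : ∀ f : Polynomial ℚ, F f = (2 / 3 * m) • (X * f) - (2 / 3 : ℚ) • (X ^ 2 * derivative f))
    (hC : ∀ f : Polynomial ℚ,
      C f = (-(1 / 3) * m ^ 2 - 2 / 3 * m - 4 / 9 * s ^ 2 + 4 / 3 * s - 1) • f) :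
    (H * E - E * H = (2 : ℚ) • E) ∧
    (H * F - F * H = -((2 : ℚ) • F)) ∧
    (E * F - F * E = H ^ 2 + C) ∧
    (C * H = H * C ∧ C * E = E * C ∧ C * F = F * C) ∧
    (∀ f : Polynomial ℚ, f.degree ≤ (M : WithBot ℕ) →
      (H f).degree ≤ (M : WithBot ℕ) ∧ (E f).degree ≤ (M : WithBot ℕ) ∧
      (F f).degree ≤ (M : WithBot ℕ) ∧ (C f).degree ≤ (M : WithBot ℕ)) := by
  refine ⟨?_, ?_, ?_, ⟨?_, ?_, ?_⟩, ?_⟩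
  case refine_1 | refine_2 | refine_3 | refine_4 | refine_5 | refine_6 =>
    apply LinearMap.ext; intro f
    simp only [LinearMap.sub_apply, LinearMap.add_apply, Module.End.mul_apply,
      LinearMap.neg_apply, Module.End.pow_apply, Function.iterate_succ, Function.iterate_zero,
      Function.comp_apply, id_eq, LinearMap.smul_apply, hH, hE, hF, hC,
      derivative_sub, derivative_add, derivative_smul, derivative_mul, derivative_X,
      derivative_C, derivative_X_pow, one_mul, mul_zero, zero_mul, add_zero, zero_add,
      mul_one, smul_sub, smul_add, smul_smul, mul_smul_comm, smul_mul_assoc,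
      mul_add, mul_sub, add_mul, sub_mul, neg_sub, ← mul_assoc, pow_succ, pow_zero]
    module
  case refine_7 =>
    intro f hf
    have hcoeff : ∀ n : ℕ, M < n → f.coeff n = 0 := fun n hn =>
      coeff_eq_zero_of_degree_lt (lt_of_le_of_lt hf (by exact_mod_cast hn))
    have hd : ∀ n : ℕ, M < n → (derivative f).coeff n = 0 := fun n hn => by
      rw [coeff_derivative, hcoeff (n+1) (by omega), zero_mul]
    have hdd : ∀ n : ℕ, M < n → (derivative (derivative f)).coeff n = 0 := fun n hn => by
      rw [coeff_derivative, hd (n+1) (by omega), zero_mul]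
    refine ⟨?_, ?_, ?_, ?_⟩
    · rw [hH]
      refine (degree_le_iff_coeff_zero _ _).2 fun k hn => ?_
      have hk : M < k := by exact_mod_cast hn
      obtain ⟨j, rfl⟩ : ∃ j, k = j + 1 := ⟨k - 1, by omega⟩
      simp [coeff_smul, coeff_X_mul, coeff_derivative, hcoeff _ hk]
    · rw [hE]
      refine (degree_le_iff_coeff_zero _ _).2 fun k hn => ?_
      have hk : M < k := by exact_mod_cast hn
      obtain ⟨j, rfl⟩ : ∃ j, k = j + 1 := ⟨k - 1, by omega⟩
      simp [coeff_smul, coeff_X_mul, coeff_derivative, hcoeff _ (by omega : M < j + 1 + 1)]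
    · rw [hF]
      refine (degree_le_iff_coeff_zero _ _).2 fun k hn => ?_
      have hk : M < k := by exact_mod_cast hn
      obtain ⟨j, rfl⟩ : ∃ j, k = j + 1 := ⟨k - 1, by omega⟩
      rcases j with _ | j
      · have hM : M = 0 := by omega
        simp [coeff_smul, coeff_X_mul, coeff_sub, sq, mul_assoc, mul_coeff_zero, hm, hM]
      · have h2 : ((X:Polynomial ℚ)^2 * derivative f).coeff (j + 1 + 1) = (derivative f).coeff j := by
          rw [show j + 1 + 1 = j + 2 from rfl, ← coeff_X_pow_mul (derivative f) 2 j]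
        rw [coeff_sub, coeff_smul, coeff_smul, coeff_X_mul, h2, coeff_derivative]
        rcases Nat.lt_or_ge M (j+1) with h | h
        · rw [hcoeff _ h]; simp
        · have hMj : M = j + 1 := by omega
          rw [hm, hMj, smul_eq_mul, smul_eq_mul]
          push_cast
          ring
    · rw [hC]
      exact le_trans (degree_smul_le _ _) hf
end
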